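/- Let (U,d) be a finite metric space, w: U → ℝ non-negative weights, λ ≥ 0, φ(S) = Σ_{u∈S} w(u) + λ·d(S). Let S, O ⊆ U with |S| = |O| = p, set Z = O∩S, Y = S∖O, and let Δ ≥ 0 be a real number such that Δ ≥ φ((S∖{y})∪{x}) − φ(S) for every y ∈ S and x ∈ U∖S (i.e., Δ upper-bounds the gain of every single swap). If φ(S) + Δ < (1/3)·φ(O), then |Y| > 3 and Δ > (1/(|Y|−3))·( 2φ(Z) + 2·Σ_{y∈Y} w(y) + λ·d(Y) + 2λ·d(Z,Y) ). -/
import Mathlib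


open Finset

/-- `dispSet d S` is the sum of `d u v` over all unordered pairs `{u,v}` of distinct
elements of `S` (for a symmetric `d` with `d u u = 0`, half the double sum). -/
noncomputable def dispSet {U : Type*} (d : U → U → ℝ) (S : Finset U) : ℝ :=
  (∑ u ∈ S, ∑ v ∈ S, d u v) / 2

/-- `dispBetween d S T` is the sum of `d u v` over all `u ∈ S` and `v ∈ T`. -/
noncomputable def dispBetween {U : Type*} (d : U → U → ℝ) (S T : Finset U) : ℝ :=
  ∑ u ∈ S, ∑ v ∈ T, d u v

/-- The max-sum diversification objective `φ(S) = Σ_{u∈S} w(u) + λ·d(S)`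
for a modular quality function given by weights `w`. -/
noncomputable def obj {U : Type*} (w : U → ℝ) (lam : ℝ) (d : U → U → ℝ)
    (S : Finset U) : ℝ :=
  ∑ u ∈ S, w u + lam * dispSet d S

set_option linter.unusedSectionVars false

section Aux
variable {U : Type*} [DecidableEq U] {d : U → U → ℝ}

lemma dispBetween_nonneg (h : ∀ u v, 0 ≤ d u v) (A B : Finset U) :
    0 ≤ dispBetween d A B :=
  Finset.sum_nonneg fun _ _ => Finset.sum_nonneg fun _ _ => h _ _

lemma dispSet_nonneg (h : ∀ u v, 0 ≤ d u v) (A : Finset U) : 0 ≤ dispSet d A := by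
  have := dispBetween_nonneg h A A
  unfold dispSet; unfold dispBetween at this; linarith

lemma dispBetween_comm (hsymm : ∀ u v, d u v = d v u) (A B : Finset U) :
    dispBetween d A B = dispBetween d B A := by
  unfold dispBetween
  rw [Finset.sum_comm]
  exact Finset.sum_congr rfl fun u _ => Finset.sum_congr rfl fun v _ => hsymm _ _

lemma two_dispSet (A : Finset U) : 2 * dispSet d A = dispBetween d A A := by
  unfold dispSet dispBetween; ring

lemma dispSet_insert (hsymm : ∀ u v, d u v = d v u) (hrefl : ∀ u, d u u = 0)
    {x : U} {T : Finset U} (hx : x ∉ T) :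
    dispSet d (insert x T) = dispSet d T + ∑ v ∈ T, d x v := by
  unfold dispSet
  rw [Finset.sum_insert hx]
  have h1 : ∀ u ∈ T, (∑ v ∈ insert x T, d u v) = d u x + ∑ v ∈ T, d u v :=
    fun u _ => Finset.sum_insert hx
  rw [Finset.sum_congr rfl h1, Finset.sum_insert hx, Finset.sum_add_distrib, hrefl]
  have h2 : ∑ u ∈ T, d u x = ∑ u ∈ T, d x u :=
    Finset.sum_congr rfl fun u _ => hsymm _ _
  rw [h2]; ring

lemma dispBetween_union_right {A B C : Finset U} (hBC : Disjoint B C) :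
    dispBetween d A (B ∪ C) = dispBetween d A B + dispBetween d A C := by
  unfold dispBetween
  rw [← Finset.sum_add_distrib]
  exact Finset.sum_congr rfl fun u _ => Finset.sum_union hBC

lemma dispBetween_union_left {A B C : Finset U} (hAB : Disjoint A B) :
    dispBetween d (A ∪ B) C = dispBetween d A C + dispBetween d B C := by
  unfold dispBetween; exact Finset.sum_union hAB

lemma dispSet_union (hsymm : ∀ u v, d u v = d v u) {A B : Finset U}
    (hAB : Disjoint A B) :
    dispSet d (A ∪ B) = dispSet d A + dispSet d B + dispBetween d A B := by
  have h1 : (2:ℝ) * dispSet d (A ∪ B) = dispBetween d (A ∪ B) (A ∪ B) := two_dispSet _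
  rw [dispBetween_union_left hAB, dispBetween_union_right hAB,
    dispBetween_union_right hAB, dispBetween_comm hsymm B A] at h1
  have h2 := two_dispSet (d := d) A
  have h3 := two_dispSet (d := d) B
  linarith

lemma sharp (hsymm : ∀ u v, d u v = d v u) (hnonneg : ∀ u v, 0 ≤ d u v)
    (hrefl : ∀ u, d u u = 0) (htri : ∀ u v w, d u w ≤ d u v + d v w)
    (X Y : Finset U) :
    (Y.card : ℝ) * dispBetween d X X ≤ 2 * ((X.card : ℝ) - 1) * dispBetween d X Y := by
  rcases X.eq_empty_or_nonempty with rfl | hX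
  · simp [dispBetween]
  have hdiag : dispBetween d X X = ∑ x ∈ X, ∑ x' ∈ X.erase x, d x x' := by
    unfold dispBetween
    exact Finset.sum_congr rfl fun x _ => (Finset.sum_erase _ (hrefl x)).symm
  rw [hdiag]
  have key : ∀ x ∈ X, (Y.card : ℝ) * ∑ x' ∈ X.erase x, d x x' ≤
      ((X.card : ℝ) - 1) * (∑ y ∈ Y, d x y) + (∑ x' ∈ X.erase x, ∑ y ∈ Y, d y x') := by
    intro x hx
    have h1 : ∀ x' ∈ X.erase x, (Y.card : ℝ) * d x x' ≤
        (∑ y ∈ Y, d x y) + ∑ y ∈ Y, d y x' := by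
      intro x' _
      have : (Y.card : ℝ) * d x x' = ∑ _y ∈ Y, d x x' := by
        rw [Finset.sum_const, nsmul_eq_mul]
      rw [this, ← Finset.sum_add_distrib]
      exact Finset.sum_le_sum fun y _ => htri x y x'
    calc (Y.card : ℝ) * ∑ x' ∈ X.erase x, d x x'
        = ∑ x' ∈ X.erase x, (Y.card : ℝ) * d x x' := by rw [Finset.mul_sum]
      _ ≤ ∑ x' ∈ X.erase x, ((∑ y ∈ Y, d x y) + ∑ y ∈ Y, d y x') :=
          Finset.sum_le_sum h1
      _ = ((X.erase x).card : ℝ) * (∑ y ∈ Y, d x y) +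
            ∑ x' ∈ X.erase x, ∑ y ∈ Y, d y x' := by
          rw [Finset.sum_add_distrib, Finset.sum_const, nsmul_eq_mul]
      _ = ((X.card : ℝ) - 1) * (∑ y ∈ Y, d x y) +
            ∑ x' ∈ X.erase x, ∑ y ∈ Y, d y x' := by
          rw [Finset.card_erase_of_mem hx]
          have : ((X.card - 1 : ℕ) : ℝ) = (X.card : ℝ) - 1 := by
            have := hX.card_pos
            push_cast [Nat.cast_sub this]
            ring
          rw [this]
  calc (Y.card : ℝ) * ∑ x ∈ X, ∑ x' ∈ X.erase x, d x x'
      = ∑ x ∈ X, (Y.card : ℝ) * ∑ x' ∈ X.erase x, d x x' := by rw [Finset.mul_sum]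
    _ ≤ ∑ x ∈ X, (((X.card : ℝ) - 1) * (∑ y ∈ Y, d x y) +
          ∑ x' ∈ X.erase x, ∑ y ∈ Y, d y x') := Finset.sum_le_sum key
    _ = ((X.card : ℝ) - 1) * dispBetween d X Y +
          ∑ x ∈ X, ∑ x' ∈ X.erase x, ∑ y ∈ Y, d y x' := by
        rw [Finset.sum_add_distrib, ← Finset.mul_sum]; rfl
    _ = ((X.card : ℝ) - 1) * dispBetween d X Y +
          ((X.card : ℝ) - 1) * dispBetween d X Y := by
        congr 1
        have hBB : ∑ x' ∈ X, ∑ y ∈ Y, d y x' = dispBetween d X Y := by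
          unfold dispBetween
          exact Finset.sum_congr rfl fun x _ =>
            Finset.sum_congr rfl fun y _ => hsymm _ _
        have hsub : ∀ x ∈ X, ∑ x' ∈ X.erase x, (∑ y ∈ Y, d y x') =
            (∑ x' ∈ X, ∑ y ∈ Y, d y x') - ∑ y ∈ Y, d y x :=
          fun x hx => Finset.sum_erase_eq_sub hx
        rw [Finset.sum_congr rfl hsub, Finset.sum_sub_distrib, Finset.sum_const,
          nsmul_eq_mul, hBB]
        ring
    _ = 2 * ((X.card : ℝ) - 1) * dispBetween d X Y := by ring

end Aux

/-- If `Δ ≥ 0` upper-bounds the gain of every single swap of `S` and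
`φ(S) + Δ < (1/3)·φ(O)` where `|S| = |O| = p`, then `|Y| > 3` and
`Δ > (1/(|Y|-3))·(2φ(Z) + 2·Σ_{y∈Y} w(y) + λ·d(Y) + 2λ·d(Z,Y))`,
where `Z = O ∩ S` and `Y = S \ O`. -/
theorem stmt_12 {U : Type*} [Fintype U] [DecidableEq U] (d : U → U → ℝ)
    (hsymm : ∀ u v, d u v = d v u)
    (hnonneg : ∀ u v, 0 ≤ d u v)
    (hrefl : ∀ u, d u u = 0)
    (htri : ∀ u v w, d u w ≤ d u v + d v w)
    (w : U → ℝ) (hw : ∀ u, 0 ≤ w u)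
    (lam : ℝ) (hlam : 0 ≤ lam)
    (p : ℕ) (S O : Finset U) (hS : S.card = p) (hO : O.card = p)
    (Δ : ℝ) (hΔ0 : 0 ≤ Δ)
    (hΔ : ∀ y ∈ S, ∀ x ∉ S,
      obj w lam d (insert x (S.erase y)) - obj w lam d S ≤ Δ)
    (h : obj w lam d S + Δ < (1 / 3) * obj w lam d O) :
    3 < (S \ O).card ∧
      Δ > (1 / (((S \ O).card : ℝ) - 3)) *
        (2 * obj w lam d (O ∩ S) + 2 * ∑ y ∈ S \ O, w y +
          lam * dispSet d (S \ O) + 2 * lam * dispBetween d (O ∩ S) (S \ O)) := by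
  classical
  set Z : Finset U := O ∩ S with hZdef
  set Y : Finset U := S \ O with hYdef
  set X : Finset U := O \ S with hXdef
  have hYS : Y ⊆ S := Finset.sdiff_subset
  have hXnotS : ∀ x ∈ X, x ∉ S := fun x hx => (Finset.mem_sdiff.1 hx).2
  have hZY : Disjoint Z Y := by
    rw [Finset.disjoint_left]
    intro a ha hb
    exact (Finset.mem_sdiff.1 hb).2 (Finset.mem_inter.1 ha).1
  have hZX : Disjoint Z X := by
    rw [Finset.disjoint_left]
    intro a ha hb
    exact (Finset.mem_sdiff.1 hb).2 (Finset.mem_inter.1 ha).2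
  have hSdec : Z ∪ Y = S := by
    ext a; simp only [hZdef, hYdef, Finset.mem_union, Finset.mem_inter,
      Finset.mem_sdiff]; tauto
  have hOdec : Z ∪ X = O := by
    ext a; simp only [hZdef, hXdef, Finset.mem_union, Finset.mem_inter,
      Finset.mem_sdiff]; tauto
  have hcardXY : X.card = Y.card :=
    Finset.card_sdiff_comm (hO.trans hS.symm)
  -- gain formula
  have hgain : ∀ y ∈ Y, ∀ x ∈ X,
      obj w lam d (insert x (S.erase y)) - obj w lam d S =
        w x - w y + lam * ((∑ v ∈ S, d x v) - d x y - ∑ v ∈ S, d y v) := by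
    intro y hy x hx
    have hyS : y ∈ S := hYS hy
    have hxS : x ∉ S := hXnotS x hx
    have hxe : x ∉ S.erase y := fun hc => hxS (Finset.mem_of_mem_erase hc)
    have hye : y ∉ S.erase y := Finset.notMem_erase y S
    have e1 : dispSet d (S.erase y) = dispSet d S - ∑ v ∈ S.erase y, d y v := by
      have := dispSet_insert hsymm hrefl hye
      rw [Finset.insert_erase hyS] at this
      linarith
    have e2 : dispSet d (insert x (S.erase y)) =
        dispSet d (S.erase y) + ∑ v ∈ S.erase y, d x v :=
      dispSet_insert hsymm hrefl hxe
    have e3 : ∑ v ∈ S.erase y, d x v = (∑ v ∈ S, d x v) - d x y :=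
      Finset.sum_erase_eq_sub hyS
    have e4 : ∑ v ∈ S.erase y, d y v = ∑ v ∈ S, d y v :=
      Finset.sum_erase _ (hrefl y)
    have e5 : ∑ u ∈ insert x (S.erase y), w u = w x + ((∑ u ∈ S, w u) - w y) := by
      rw [Finset.sum_insert hxe, Finset.sum_erase_eq_sub hyS]
    unfold obj
    rw [e2, e1, e3, e4, e5]
    ring
  -- sum of gains is bounded by t² Δ
  have hsum : ∑ y ∈ Y, ∑ x ∈ X,
      (w x - w y + lam * ((∑ v ∈ S, d x v) - d x y - ∑ v ∈ S, d y v)) ≤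
      (Y.card : ℝ) * ((X.card : ℝ) * Δ) := by
    have hin : ∀ y ∈ Y, ∑ x ∈ X,
        (w x - w y + lam * ((∑ v ∈ S, d x v) - d x y - ∑ v ∈ S, d y v)) ≤
        (X.card : ℝ) * Δ := by
      intro y hy
      calc ∑ x ∈ X, (w x - w y + lam * ((∑ v ∈ S, d x v) - d x y - ∑ v ∈ S, d y v))
          = ∑ x ∈ X, (obj w lam d (insert x (S.erase y)) - obj w lam d S) :=
            Finset.sum_congr rfl fun x hx => (hgain y hy x hx).symm
        _ ≤ ∑ _x ∈ X, Δ :=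
            Finset.sum_le_sum fun x hx => hΔ y (hYS hy) x (hXnotS x hx)
        _ = (X.card : ℝ) * Δ := by rw [Finset.sum_const, nsmul_eq_mul]
    calc ∑ y ∈ Y, ∑ x ∈ X,
        (w x - w y + lam * ((∑ v ∈ S, d x v) - d x y - ∑ v ∈ S, d y v))
        ≤ ∑ _y ∈ Y, (X.card : ℝ) * Δ := Finset.sum_le_sum hin
      _ = (Y.card : ℝ) * ((X.card : ℝ) * Δ) := by
          rw [Finset.sum_const, nsmul_eq_mul]
  -- evaluate the sum of gains
  have hG : ∑ y ∈ Y, ∑ x ∈ X,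
      (w x - w y + lam * ((∑ v ∈ S, d x v) - d x y - ∑ v ∈ S, d y v)) =
      (Y.card : ℝ) * (∑ x ∈ X, w x) - (X.card : ℝ) * (∑ y ∈ Y, w y) +
        lam * ((Y.card : ℝ) * dispBetween d X S - dispBetween d X Y -
          (X.card : ℝ) * dispBetween d Y S) := by
    have inner : ∀ y, ∑ x ∈ X,
        (w x - w y + lam * ((∑ v ∈ S, d x v) - d x y - ∑ v ∈ S, d y v)) =
        (∑ x ∈ X, w x) - (X.card : ℝ) * w y +
          lam * (dispBetween d X S - (∑ x ∈ X, d x y) -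
            (X.card : ℝ) * ∑ v ∈ S, d y v) := by
      intro y
      rw [Finset.sum_add_distrib, Finset.sum_sub_distrib, ← Finset.mul_sum,
        Finset.sum_sub_distrib, Finset.sum_sub_distrib, Finset.sum_const,
        Finset.sum_const, nsmul_eq_mul, nsmul_eq_mul]
      rfl
    rw [Finset.sum_congr rfl fun y _ => inner y]
    have hc : ∑ y ∈ Y, ∑ x ∈ X, d x y = dispBetween d X Y := by
      unfold dispBetween; exact Finset.sum_comm
    simp only [Finset.sum_add_distrib, Finset.sum_sub_distrib, Finset.sum_const,
      nsmul_eq_mul, ← Finset.mul_sum]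
    rw [hc]
    unfold dispBetween
    ring
  -- decompositions
  have hDBXS : dispBetween d X S = dispBetween d X Z + dispBetween d X Y := by
    rw [← hSdec, dispBetween_union_right hZY]
  have hDBYS : dispBetween d Y S = dispBetween d Y Z + 2 * dispSet d Y := by
    rw [← hSdec, dispBetween_union_right hZY, two_dispSet]
  have hDBYZ : dispBetween d Y Z = dispBetween d Z Y := dispBetween_comm hsymm Y Z
  have hobjO : obj w lam d O = obj w lam d Z + (∑ x ∈ X, w x) +
      lam * (dispSet d X + dispBetween d X Z) := by
    unfold obj
    rw [← hOdec, Finset.sum_union hZX, dispSet_union hsymm hZX,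
      dispBetween_comm hsymm Z X]
    ring
  have hobjS : obj w lam d S = obj w lam d Z + (∑ y ∈ Y, w y) +
      lam * dispSet d Y + lam * dispBetween d Z Y := by
    unfold obj
    rw [← hSdec, Finset.sum_union hZY, dispSet_union hsymm hZY]
    ring
  -- nonnegativity facts
  have hobjZ0 : 0 ≤ obj w lam d Z :=
    add_nonneg (Finset.sum_nonneg fun u _ => hw u)
      (mul_nonneg hlam (dispSet_nonneg hnonneg Z))
  have hwY0 : 0 ≤ ∑ y ∈ Y, w y := Finset.sum_nonneg fun u _ => hw u
  have hDY0 : 0 ≤ dispSet d Y := dispSet_nonneg hnonneg Y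
  have hDX0 : 0 ≤ dispSet d X := dispSet_nonneg hnonneg X
  have hDBZY0 : 0 ≤ dispBetween d Z Y := dispBetween_nonneg hnonneg Z Y
  -- Y is nonempty
  have hYne : Y.Nonempty := by
    rcases Y.eq_empty_or_nonempty with hne | hne
    · exfalso
      have hSsub : S ⊆ O := by
        rwa [← Finset.sdiff_eq_empty_iff_subset]
      have hSO : S = O := Finset.eq_of_subset_of_card_le hSsub
        (le_of_eq (hO.trans hS.symm))
      have hS0 : 0 ≤ obj w lam d S :=
        add_nonneg (Finset.sum_nonneg fun u _ => hw u)
          (mul_nonneg hlam (dispSet_nonneg hnonneg S))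
      rw [← hSO] at h
      linarith
    · exact hne
  set t : ℝ := (Y.card : ℝ) with htdef
  have ht1 : (1 : ℝ) ≤ t := by
    rw [htdef]; exact_mod_cast hYne.card_pos
  have hXt : (X.card : ℝ) = t := by rw [htdef]; exact_mod_cast hcardXY
  clear_value t
  -- sharp triangle bound
  have hsharp : t * dispBetween d X X ≤ 2 * (t - 1) * dispBetween d X Y := by
    have h1 := sharp hsymm hnonneg hrefl htri X Y
    rw [hXt, ← htdef] at h1
    exact h1
  have h2X : dispBetween d X X = 2 * dispSet d X := (two_dispSet X).symm
  rw [h2X] at hsharp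
  -- combine: t² Δ ≥ t * (stuff)
  have hmain : t * t * Δ ≥ t * ((∑ x ∈ X, w x) - (∑ y ∈ Y, w y) +
      lam * (dispBetween d X Z + dispSet d X - dispBetween d Z Y -
        2 * dispSet d Y)) := by
    rw [hG, hXt, hDBXS, hDBYS, hDBYZ] at hsum
    have hlamsharp : lam * (t * (2 * dispSet d X)) ≤
        lam * (2 * (t - 1) * dispBetween d X Y) :=
      mul_le_mul_of_nonneg_left hsharp hlam
    nlinarith [hsum, hlamsharp]
  -- divide by t
  have hkey : (∑ x ∈ X, w x) - (∑ y ∈ Y, w y) +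
      lam * (dispBetween d X Z + dispSet d X - dispBetween d Z Y -
        2 * dispSet d Y) ≤ t * Δ := by
    have ht0 : (0 : ℝ) < t := by linarith
    refine le_of_mul_le_mul_left ?_ ht0
    calc t * ((∑ x ∈ X, w x) - (∑ y ∈ Y, w y) +
        lam * (dispBetween d X Z + dispSet d X - dispBetween d Z Y -
          2 * dispSet d Y)) ≤ t * t * Δ := hmain
      _ = t * (t * Δ) := by ring
  set R : ℝ := 2 * obj w lam d Z + 2 * ∑ y ∈ Y, w y +
      lam * dispSet d Y + 2 * lam * dispBetween d Z Y with hRdef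
  clear_value R
  have hR0 : 0 ≤ R := by
    have := mul_nonneg hlam hDY0
    have := mul_nonneg hlam hDBZY0
    rw [hRdef]; linarith
  have hfinal : (t - 3) * Δ > R := by
    have hOgt : obj w lam d O > 3 * (obj w lam d S + Δ) := by linarith
    rw [hobjO] at hOgt
    rw [hobjS] at hOgt
    rw [hRdef]
    nlinarith [hkey, hOgt]
  have ht3 : (3 : ℝ) < t := by
    by_contra hc
    push_neg at hc
    have hnp : (3 - t) * Δ ≥ 0 := mul_nonneg (by linarith) hΔ0
    linarith [hfinal, hR0, hnp]
  constructor
  · rw [htdef] at ht3; exact_mod_cast ht3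
  · have hpos : (0 : ℝ) < t - 3 := by linarith
    rw [gt_iff_lt, one_div, inv_mul_eq_div, div_lt_iff₀ hpos]
    linarith [hfinal]
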